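/- For every integer n ≥ 1 and k ≥ 1, Σ_{r=1}^{2n} r^{2k−1} = 4·Σ_{r=1}^{n} r^{2k−1} − n^{2k−1} + 2·Σ_{j=1}^{k−1} C(2k−1, 2j−1) · S_{2j−1} · n^{2k−2j}, where S_{2j−1} = Σ_{r=1}^{n} r^{2j−1}. -/

import Mathlib

/-!
Write `m = 2k - 1`. Splitting `[1, 2n]` at `n` gives
`Σ_{r ≤ 2n} r^m = S_m + Σ_{r ≤ n} (n + r)^m`, while reflecting `r ↦ n - r` gives
`Σ_{r ≤ n} (n - r)^m = S_m - n^m`. Since `m` is odd, the binomial theorem leaves only the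
odd powers of `r` in `(n + r)^m - (n - r)^m`, each doubled, so summing over `r` expresses the
difference through the odd power sums `S_{2j-1}`; the top term `j = k` is `2 S_m`, which
together with the two copies of `S_m` above gives `4 S_m`.
-/

open Finset

theorem Finset.sum_range_two_mul {M : Type*} [AddCommMonoid M] (f : ℕ → M) (N : ℕ) :
    ∑ i ∈ range (2 * N), f i = ∑ j ∈ range N, (f (2 * j) + f (2 * j + 1)) := by
  induction N with
  | zero => simp
  | succ N ih => rw [Nat.mul_succ, sum_range_succ, sum_range_succ, sum_range_succ, ih, add_assoc]

section PowerSums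

variable {R : Type*} [CommRing R]

theorem add_pow_sub_sub_pow_two_mul_add_one (x y : R) (K : ℕ) :
    (x + y) ^ (2 * K + 1) - (-x + y) ^ (2 * K + 1) =
      2 * ∑ j ∈ range (K + 1),
        ((2 * K + 1).choose (2 * j + 1) : R) * x ^ (2 * j + 1) * y ^ (2 * (K - j)) := by
  rw [add_pow, add_pow, ← sum_sub_distrib, show 2 * K + 1 + 1 = 2 * (K + 1) by ring,
    sum_range_two_mul, mul_sum]
  refine sum_congr rfl fun j hj => ?_
  have hj : j ≤ K := Nat.lt_succ_iff.mp (mem_range.mp hj)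
  have h_even : 2 * K + 1 - 2 * j = 2 * (K - j) + 1 := by omega
  have h_odd : 2 * K + 1 - (2 * j + 1) = 2 * (K - j) := by omega
  rw [h_even, h_odd, Even.neg_pow ⟨j, two_mul j⟩, Odd.neg_pow ⟨j, rfl⟩]
  ring

theorem sum_range_add_pow_sub_sub_pow (N K : ℕ) (y : R) :
    ∑ r ∈ range N, ((y + r) ^ (2 * K + 1) - (y - r) ^ (2 * K + 1)) =
      2 * ∑ j ∈ range (K + 1), ((2 * K + 1).choose (2 * j + 1) : R) *
        (∑ r ∈ range N, (r : R) ^ (2 * j + 1)) * y ^ (2 * (K - j)) := by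
  simp_rw [add_comm y, sub_eq_neg_add y, add_pow_sub_sub_pow_two_mul_add_one, ← mul_sum]
  rw [sum_comm]
  congr 1
  refine sum_congr rfl fun j _ => ?_
  rw [mul_sum, sum_mul]

theorem sum_range_add_pow (n p : ℕ) :
    ∑ r ∈ range (n + 1), ((n : R) + r) ^ p =
      ∑ r ∈ range (2 * n + 1), (r : R) ^ p - ∑ r ∈ range n, (r : R) ^ p := by
  rw [show 2 * n + 1 = n + (n + 1) by ring, sum_range_add (fun r => (r : R) ^ p) n]
  push_cast
  ring

theorem sum_range_sub_pow (n p : ℕ) :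
    ∑ r ∈ range (n + 1), ((n : R) - r) ^ p = ∑ r ∈ range (n + 1), (r : R) ^ p := by
  rw [← sum_range_reflect]
  refine sum_congr rfl fun r hr => ?_
  rw [Nat.add_sub_cancel, Nat.cast_sub (Nat.lt_succ_iff.mp (mem_range.mp hr)), sub_sub_cancel]

theorem sum_Icc_one_pow {p : ℕ} (hp : p ≠ 0) (N : ℕ) :
    ∑ r ∈ Icc 1 N, (r : R) ^ p = ∑ r ∈ range (N + 1), (r : R) ^ p := by
  rw [range_eq_Ico, sum_eq_sum_Ico_succ_bot N.zero_lt_succ, zero_add, Nat.succ_eq_add_one,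
    Ico_add_one_right_eq_Icc]
  simp [hp]

end PowerSums

theorem stmt_17_general (n k : ℕ) (hk : 1 ≤ k) :
    (∑ r ∈ Finset.Icc 1 (2 * n), (r : ℚ) ^ (2 * k - 1)) =
    4 * (∑ r ∈ Finset.Icc 1 n, (r : ℚ) ^ (2 * k - 1)) - (n : ℚ) ^ (2 * k - 1) +
      2 * ∑ j ∈ Finset.Icc 1 (k - 1), (Nat.choose (2 * k - 1) (2 * j - 1) : ℚ) *
        (∑ r ∈ Finset.Icc 1 n, (r : ℚ) ^ (2 * j - 1)) * (n : ℚ) ^ (2 * k - 2 * j) := by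
  obtain ⟨K, rfl⟩ : ∃ K, k = K + 1 := ⟨k - 1, by omega⟩
  have h_reindex : ∑ j ∈ Icc 1 (K + 1 - 1), ((2 * (K + 1) - 1).choose (2 * j - 1) : ℚ) *
        (∑ r ∈ Icc 1 n, (r : ℚ) ^ (2 * j - 1)) * (n : ℚ) ^ (2 * (K + 1) - 2 * j) =
      ∑ j ∈ range K, ((2 * K + 1).choose (2 * j + 1) : ℚ) *
        (∑ r ∈ range (n + 1), (r : ℚ) ^ (2 * j + 1)) * (n : ℚ) ^ (2 * (K - j)) := by
    rw [Nat.add_sub_cancel, ← Ico_add_one_right_eq_Icc, sum_Ico_eq_sum_range, Nat.add_sub_cancel]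
    refine sum_congr rfl fun j _ => ?_
    rw [show 2 * (1 + j) - 1 = 2 * j + 1 by omega,
      show 2 * (K + 1) - 2 * (1 + j) = 2 * (K - j) by omega,
      show 2 * (K + 1) - 1 = 2 * K + 1 by omega, sum_Icc_one_pow (by omega)]
  have key := sum_range_add_pow_sub_sub_pow (n + 1) K (n : ℚ)
  rw [sum_sub_distrib, sum_range_add_pow, sum_range_sub_pow, sum_range_succ (fun j => _ * _ * _),
    Nat.choose_self, Nat.sub_self] at key
  rw [h_reindex, show 2 * (K + 1) - 1 = 2 * K + 1 by omega, sum_Icc_one_pow (by omega),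
    sum_Icc_one_pow (by omega)]
  simp only [Nat.cast_one, one_mul, mul_zero, pow_zero, mul_one] at key
  linarith [sum_range_succ (fun r => (r : ℚ) ^ (2 * K + 1)) n]

theorem stmt_17 (n k : ℕ) (hn : 1 ≤ n) (hk : 1 ≤ k) :
    (∑ r ∈ Finset.Icc 1 (2 * n), (r : ℚ) ^ (2 * k - 1)) =
    4 * (∑ r ∈ Finset.Icc 1 n, (r : ℚ) ^ (2 * k - 1)) - (n : ℚ) ^ (2 * k - 1) +
      2 * ∑ j ∈ Finset.Icc 1 (k - 1), (Nat.choose (2 * k - 1) (2 * j - 1) : ℚ) *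
        (∑ r ∈ Finset.Icc 1 n, (r : ℚ) ^ (2 * j - 1)) * (n : ℚ) ^ (2 * k - 2 * j) :=
  stmt_17_general n k hk
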